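/- Define, for a large integer N, û_N(n,τ) = 1_{n = N e₁} 1_{[-1,1]}(τ + N²) and v̂_N(n,τ) = 1_{n = -N e₁} 1_{[-1,1]}(-τ + N²) on ℤ² × ℝ. Then the convolution giving the Fourier transform of ū_N v̄_N satisfies 𝓕(ū_N v̄_N)(n,τ) ≥ 1_{n=0} 1_{[-1,1]}(τ) pointwise. Moreover ‖u_N‖_{X^{s,b}} ∼ N^s and ‖⟨τ+|n|²⟩^{s/2+b} v̂_N(n,τ)‖_{ℓ²_n L²_τ} ∼ N^{s+2b}. -/

import Mathlib

open MeasureTheory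

noncomputable def jap (n : ℤ × ℤ) : ℝ := Real.sqrt (1 + ((n.1 : ℝ) ^ 2 + (n.2 : ℝ) ^ 2))

noncomputable def nsq (n : ℤ × ℤ) : ℝ := (n.1 : ℝ) ^ 2 + (n.2 : ℝ) ^ 2

noncomputable def jb (x : ℝ) : ℝ := Real.sqrt (1 + x ^ 2)

noncomputable def Xnorm (s b : ℝ) (u : ℤ × ℤ → ℝ → ℂ) : ℝ :=
  Real.sqrt (∑' n : ℤ × ℤ, ∫ τ : ℝ, (jap n ^ s * jb (τ + nsq n) ^ b * ‖u n τ‖) ^ 2)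

noncomputable def conjFT (u : ℤ × ℤ → ℝ → ℂ) : ℤ × ℤ → ℝ → ℂ :=
  fun n τ => starRingEnd ℂ (u (-n) (-τ))

noncomputable def conv (u v : ℤ × ℤ → ℝ → ℂ) : ℤ × ℤ → ℝ → ℂ :=
  fun n τ => ∑' n₁ : ℤ × ℤ, ∫ τ₁ : ℝ, u n₁ τ₁ * v (n - n₁) (τ - τ₁)

/-- `û_N(n,τ) = 1_{n = N e₁} 1_{[-1,1]}(τ + N²)`. -/
noncomputable def uN (N : ℕ) : ℤ × ℤ → ℝ → ℂ :=
  fun n τ => if n = ((N : ℤ), 0) then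
    ((Set.indicator (Set.Icc (-1 : ℝ) 1) (fun _ => (1 : ℝ)) (τ + (N : ℝ) ^ 2) : ℝ) : ℂ)
  else 0

/-- `v̂_N(n,τ) = 1_{n = -N e₁} 1_{[-1,1]}(-τ + N²)`. -/
noncomputable def vN (N : ℕ) : ℤ × ℤ → ℝ → ℂ :=
  fun n τ => if n = (-(N : ℤ), 0) then
    ((Set.indicator (Set.Icc (-1 : ℝ) 1) (fun _ => (1 : ℝ)) (-τ + (N : ℝ) ^ 2) : ℝ) : ℂ)
  else 0

/-!
Both `û_N` and `v̂_N` live on a single frequency (`N e₁`, resp. `-N e₁`), so each `ℓ²` sum collapses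
to one term and the convolution at `n = 0` to one integral in `τ₁`. That integral is the length of
the overlap of the windows `[N² - 1, N² + 1]` and `[N² + τ - 1, N² + τ + 1]`, namely `2 - |τ| ≥ 1`.
For the norms, on the supports `⟨N e₁⟩ ∈ [N, √2 N]`, `⟨τ + N²⟩ ∈ [1, √2]` for `u_N`, and
`⟨τ + |n|²⟩ ∈ [N², 4 N²]` for `v_N`; and `x ≤ y ≤ M x` gives `y ^ e ≍ x ^ e` with constants
`M ^ (±|e|)`, uniformly in `N`.
-/

open Set

local notation "χ" => Set.indicator (Set.Icc (-1 : ℝ) 1) (fun _ => (1 : ℝ))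

section JapaneseBracket

lemma one_le_jb (x : ℝ) : 1 ≤ jb x :=
  Real.one_le_sqrt.2 (le_add_of_nonneg_right (sq_nonneg x))

lemma jb_pos (x : ℝ) : 0 < jb x := one_pos.trans_le (one_le_jb x)

lemma abs_le_jb (x : ℝ) : |x| ≤ jb x :=
  Real.abs_le_sqrt (le_add_of_nonneg_left zero_le_one)

lemma jb_le_one_add_abs (x : ℝ) : jb x ≤ 1 + |x| :=
  Real.sqrt_le_iff.2 ⟨by positivity, by nlinarith [abs_nonneg x, sq_abs x]⟩

lemma continuous_jb_rpow (e : ℝ) : Continuous fun x => jb x ^ e :=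
  ((continuous_const.add (continuous_pow 2)).sqrt).rpow_const fun x => Or.inl (jb_pos x).ne'

lemma jap_natCast_zero (m : ℕ) : jap ((m : ℤ), 0) = jb m := by
  simp [jap, jb]

lemma nsq_natCast_zero (m : ℕ) : nsq ((m : ℤ), 0) = (m : ℝ) ^ 2 := by
  simp [nsq]

lemma nsq_neg_natCast_zero (m : ℕ) : nsq (-(m : ℤ), 0) = (m : ℝ) ^ 2 := by
  simp [nsq]

end JapaneseBracket

section RpowComparison

variable {t x y M : ℝ}

lemma rpow_le_rpow_abs_of_one_le (e : ℝ) (ht : 1 ≤ t) (htM : t ≤ M) : t ^ e ≤ M ^ |e| :=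
  (Real.rpow_le_rpow_of_exponent_le ht (le_abs_self e)).trans
    (Real.rpow_le_rpow (zero_le_one.trans ht) htM (abs_nonneg e))

lemma rpow_neg_abs_le_rpow_of_one_le (e : ℝ) (ht : 1 ≤ t) (htM : t ≤ M) : M ^ (-|e|) ≤ t ^ e :=
  (Real.rpow_le_rpow_of_nonpos (one_pos.trans_le ht) htM (neg_nonpos.2 (abs_nonneg e))).trans
    (Real.rpow_le_rpow_of_exponent_le ht (neg_abs_le e))

lemma rpow_bounds_of_le_of_le_mul (e : ℝ) (hx : 0 < x) (hxy : x ≤ y) (hyM : y ≤ M * x) :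
    M ^ (-|e|) * x ^ e ≤ y ^ e ∧ y ^ e ≤ M ^ |e| * x ^ e := by
  have hratio : y ^ e = (y / x) ^ e * x ^ e := by
    rw [← Real.mul_rpow (div_nonneg (hx.le.trans hxy) hx.le) hx.le, div_mul_cancel₀ y hx.ne']
  have h1 : 1 ≤ y / x := (one_le_div hx).2 hxy
  have h2 : y / x ≤ M := (div_le_iff₀ hx).2 hyM
  have hxe : 0 ≤ x ^ e := Real.rpow_nonneg hx.le e
  rw [hratio]
  exact ⟨mul_le_mul_of_nonneg_right (rpow_neg_abs_le_rpow_of_one_le e h1 h2) hxe,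
    mul_le_mul_of_nonneg_right (rpow_le_rpow_abs_of_one_le e h1 h2) hxe⟩

end RpowComparison

lemma sqrt_setIntegral_Icc_bounds {f : ℝ → ℝ} {a b m M : ℝ} (hab : a ≤ b)
    (hf : IntegrableOn f (Icc a b)) (hM : 0 ≤ M)
    (hlo : ∀ x ∈ Icc a b, m ^ 2 ≤ f x) (hhi : ∀ x ∈ Icc a b, f x ≤ M ^ 2) :
    √(b - a) * m ≤ √(∫ x in Icc a b, f x) ∧ √(∫ x in Icc a b, f x) ≤ √(b - a) * M := by
  have hvol : volume (Icc a b) ≠ ⊤ := by simp [Real.volume_Icc]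
  have hlen : volume.real (Icc a b) = b - a := Real.volume_real_Icc_of_le hab
  have hint_lo : m ^ 2 * (b - a) ≤ ∫ x in Icc a b, f x := by
    simpa [hlen] using setIntegral_ge_of_const_le_real measurableSet_Icc hvol hlo hf
  have hint_hi : ∫ x in Icc a b, f x ≤ M ^ 2 * (b - a) := by
    have hnorm : ∀ x ∈ Icc a b, ‖f x‖ ≤ M ^ 2 := fun x hx =>
      (Real.norm_of_nonneg ((sq_nonneg m).trans (hlo x hx))).trans_le (hhi x hx)
    simpa [hlen, mul_comm] using
      (le_abs_self _).trans (norm_setIntegral_le_of_norm_le_const hvol.lt_top hnorm)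
  constructor
  · calc √(b - a) * m ≤ √(b - a) * |m| := by gcongr; exact le_abs_self m
      _ = √(m ^ 2 * (b - a)) := by
        rw [Real.sqrt_mul' _ (sub_nonneg.2 hab), Real.sqrt_sq_eq_abs, mul_comm]
      _ ≤ √(∫ x in Icc a b, f x) := Real.sqrt_le_sqrt hint_lo
  · calc √(∫ x in Icc a b, f x) ≤ √(M ^ 2 * (b - a)) := Real.sqrt_le_sqrt hint_hi
      _ = √(b - a) * M := by rw [Real.sqrt_mul' _ (sub_nonneg.2 hab), Real.sqrt_sq hM, mul_comm]

section Indicator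

lemma norm_ofReal_indicator_one (s : Set ℝ) (x : ℝ) :
    ‖((s.indicator (fun _ => (1 : ℝ)) x : ℝ) : ℂ)‖ = s.indicator (fun _ => (1 : ℝ)) x := by
  rw [Complex.norm_real, Real.norm_of_nonneg (indicator_nonneg (fun _ _ => zero_le_one) x)]

lemma mul_indicator_one_sq {α : Type*} (s : Set α) (f : α → ℝ) (x : α) :
    (f x * s.indicator (fun _ => (1 : ℝ)) x) ^ 2 = s.indicator (fun y => f y ^ 2) x := by
  by_cases hx : x ∈ s <;> simp [hx]

lemma indicator_Icc_one_sub (c x : ℝ) :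
    χ (c - x) = (Icc (c - 1) (c + 1)).indicator (fun _ => (1 : ℝ)) x := by
  have : c - x ∈ Icc (-1 : ℝ) 1 ↔ x ∈ Icc (c - 1) (c + 1) := by
    simp only [mem_Icc]; constructor <;> rintro ⟨h₁, h₂⟩ <;> constructor <;> linarith
  by_cases hx : x ∈ Icc (c - 1) (c + 1) <;> simp [this, hx]

lemma one_le_integral_indicator_mul_indicator (c τ : ℝ) (hτ : |τ| ≤ 1) :
    1 ≤ ∫ x, χ (c - x) * χ (c + τ - x) := by
  simp_rw [indicator_Icc_one_sub, ← inter_indicator_mul, mul_one]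
  rw [integral_indicator_const _ (measurableSet_Icc.inter measurableSet_Icc), Icc_inter_Icc,
    Real.volume_real_Icc, smul_eq_mul, mul_one]
  rw [abs_le] at hτ
  refine le_max_of_le_left ?_
  rcases le_total 0 τ with h | h
  · rw [sup_eq_right.2 (by linarith), inf_eq_left.2 (by linarith)]; linarith
  · rw [sup_eq_left.2 (by linarith), inf_eq_right.2 (by linarith)]; linarith

end Indicator

section ExampleFunctions

variable (N : ℕ)

lemma tsum_integral_uN (s b : ℝ) :
    ∑' n : ℤ × ℤ, ∫ τ : ℝ, (jap n ^ s * jb (τ + nsq n) ^ b * ‖uN N n τ‖) ^ 2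
      = (jap ((N : ℤ), 0) ^ s) ^ 2 * ∫ σ in Icc (-1 : ℝ) 1, (jb σ ^ b) ^ 2 := by
  rw [tsum_eq_single ((N : ℤ), 0) fun n hn => by simp [uN, hn]]
  set A := jap ((N : ℤ), 0) ^ s
  have hnorm (τ : ℝ) : ‖uN N ((N : ℤ), 0) τ‖ = χ (τ + (N : ℝ) ^ 2) := by
    simp only [uN, if_pos, norm_ofReal_indicator_one]
  simp only [hnorm, nsq_natCast_zero]
  calc ∫ τ, (A * jb (τ + (N : ℝ) ^ 2) ^ b * χ (τ + (N : ℝ) ^ 2)) ^ 2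
      = ∫ σ, (A * jb σ ^ b * χ σ) ^ 2 :=
        integral_add_right_eq_self (fun σ => (A * jb σ ^ b * χ σ) ^ 2) _
    _ = ∫ σ, (Icc (-1 : ℝ) 1).indicator (fun σ => (A * jb σ ^ b) ^ 2) σ := by
        simp only [mul_indicator_one_sq _ (fun σ => A * jb σ ^ b)]
    _ = A ^ 2 * ∫ σ in Icc (-1 : ℝ) 1, (jb σ ^ b) ^ 2 := by
        simp only [integral_indicator measurableSet_Icc, mul_pow, integral_const_mul]

lemma Xnorm_uN (s b : ℝ) :
    Xnorm s b (uN N) = jap ((N : ℤ), 0) ^ s * √(∫ σ in Icc (-1 : ℝ) 1, (jb σ ^ b) ^ 2) := by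
  rw [Xnorm, tsum_integral_uN, Real.sqrt_mul (sq_nonneg _), Real.sqrt_sq]
  exact Real.rpow_nonneg (Real.sqrt_nonneg _) s

lemma tsum_integral_vN (e : ℝ) :
    ∑' n : ℤ × ℤ, ∫ τ : ℝ, (jb (τ + nsq n) ^ e * ‖vN N n τ‖) ^ 2
      = ∫ τ in Icc ((N : ℝ) ^ 2 - 1) ((N : ℝ) ^ 2 + 1), (jb (τ + (N : ℝ) ^ 2) ^ e) ^ 2 := by
  rw [tsum_eq_single (-(N : ℤ), 0) fun n hn => by simp [vN, hn]]
  have hnorm (τ : ℝ) : ‖vN N (-(N : ℤ), 0) τ‖ =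
      (Icc ((N : ℝ) ^ 2 - 1) ((N : ℝ) ^ 2 + 1)).indicator (fun _ => (1 : ℝ)) τ := by
    simp only [vN, if_pos, norm_ofReal_indicator_one, neg_add_eq_sub, indicator_Icc_one_sub]
  simp only [hnorm, nsq_neg_natCast_zero,
    mul_indicator_one_sq _ (fun τ => jb (τ + (N : ℝ) ^ 2) ^ e)]
  exact integral_indicator measurableSet_Icc

lemma conjFT_uN_apply (n : ℤ × ℤ) (τ : ℝ) :
    conjFT (uN N) n τ = if n = (-(N : ℤ), 0) then ((χ ((N : ℝ) ^ 2 - τ) : ℝ) : ℂ) else 0 := by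
  simp [conjFT, uN, neg_eq_iff_eq_neg, neg_add_eq_sub, apply_ite (starRingEnd ℂ)]

lemma conjFT_vN_apply (n : ℤ × ℤ) (τ : ℝ) :
    conjFT (vN N) n τ = if n = ((N : ℤ), 0) then ((χ ((N : ℝ) ^ 2 + τ) : ℝ) : ℂ) else 0 := by
  simp [conjFT, vN, neg_eq_iff_eq_neg, add_comm, apply_ite (starRingEnd ℂ)]

lemma indicator_le_norm_conv_conjFT_uN_vN (n : ℤ × ℤ) (τ : ℝ) :
    (if n = (0, 0) then χ τ else 0) ≤ ‖conv (conjFT (uN N)) (conjFT (vN N)) n τ‖ := by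
  split_ifs with hn
  case neg => exact norm_nonneg _
  by_cases hτ : τ ∈ Icc (-1 : ℝ) 1
  case neg => simp [hτ]
  have hconv : conv (conjFT (uN N)) (conjFT (vN N)) n τ
      = ((∫ x, χ ((N : ℝ) ^ 2 - x) * χ ((N : ℝ) ^ 2 + τ - x) : ℝ) : ℂ) := by
    rw [conv, tsum_eq_single (-(N : ℤ), 0) fun n₁ hn₁ => by simp [conjFT_uN_apply, hn₁]]
    have hdiff : n - (-(N : ℤ), 0) = ((N : ℤ), 0) := by simp [hn]
    simp only [conjFT_uN_apply, conjFT_vN_apply, hdiff, if_pos, add_sub_assoc, ← Complex.ofReal_mul]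
    exact integral_ofReal
  rw [indicator_of_mem hτ, hconv, Complex.norm_real]
  exact (one_le_integral_indicator_mul_indicator _ τ (abs_le.2 hτ)).trans (le_abs_self _)

end ExampleFunctions

lemma Xnorm_uN_comparable (s b : ℝ) :
    ∃ c C : ℝ, 0 < c ∧ 0 < C ∧ ∀ N : ℕ, 1 ≤ N →
      c * (N : ℝ) ^ s ≤ Xnorm s b (uN N) ∧ Xnorm s b (uN N) ≤ C * (N : ℝ) ^ s := by
  set K := √(∫ σ in Icc (-1 : ℝ) 1, (jb σ ^ b) ^ 2)
  have hK : 0 < K := by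
    have hsupp : Function.support (fun σ => (jb σ ^ b) ^ 2) = univ :=
      eq_univ_of_forall fun σ => (pow_pos (Real.rpow_pos_of_pos (jb_pos σ) b) 2).ne'
    refine Real.sqrt_pos.2 ((setIntegral_pos_iff_support_of_nonneg_ae
      (ae_of_all _ fun σ => sq_nonneg _) ((continuous_jb_rpow b).pow 2).integrableOn_Icc).2 ?_)
    simp [hsupp, Real.volume_Icc]
  refine ⟨√2 ^ (-|s|) * K, √2 ^ |s| * K, by positivity, by positivity, fun N hN₁ => ?_⟩
  have hN : (1 : ℝ) ≤ N := by exact_mod_cast hN₁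
  have hjb_le : jb N ≤ √2 * N :=
    calc jb N ≤ √(2 * (N : ℝ) ^ 2) := Real.sqrt_le_sqrt (by nlinarith)
      _ = √2 * N := by rw [Real.sqrt_mul zero_le_two, Real.sqrt_sq (by positivity)]
  obtain ⟨hlo, hhi⟩ := rpow_bounds_of_le_of_le_mul s (by positivity)
    ((le_abs_self _).trans (abs_le_jb N)) hjb_le
  rw [Xnorm_uN, jap_natCast_zero, mul_right_comm, mul_right_comm _ K]
  exact ⟨mul_le_mul_of_nonneg_right hlo hK.le, mul_le_mul_of_nonneg_right hhi hK.le⟩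

lemma vN_weighted_norm_comparable (s b : ℝ) :
    ∃ c C : ℝ, 0 < c ∧ 0 < C ∧ ∀ N : ℕ, 1 ≤ N →
      c * (N : ℝ) ^ (s + 2 * b)
          ≤ √(∑' n : ℤ × ℤ, ∫ τ : ℝ, (jb (τ + nsq n) ^ (s / 2 + b) * ‖vN N n τ‖) ^ 2)
      ∧ √(∑' n : ℤ × ℤ, ∫ τ : ℝ, (jb (τ + nsq n) ^ (s / 2 + b) * ‖vN N n τ‖) ^ 2)
          ≤ C * (N : ℝ) ^ (s + 2 * b) := by
  set e := s / 2 + b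
  refine ⟨√2 * 4 ^ (-|e|), √2 * 4 ^ |e|, by positivity, by positivity, fun N hN₁ => ?_⟩
  have hN : (1 : ℝ) ≤ (N : ℝ) ^ 2 := one_le_pow₀ (by exact_mod_cast hN₁)
  have hpow : ((N : ℝ) ^ 2) ^ e = (N : ℝ) ^ (s + 2 * b) := by
    rw [← Real.rpow_natCast_mul (Nat.cast_nonneg N)]
    congr 1
    simp only [e]
    push_cast
    ring
  have hweight (τ : ℝ) (hτ : τ ∈ Icc ((N : ℝ) ^ 2 - 1) ((N : ℝ) ^ 2 + 1)) :
      4 ^ (-|e|) * (N : ℝ) ^ (s + 2 * b) ≤ jb (τ + (N : ℝ) ^ 2) ^ e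
        ∧ jb (τ + (N : ℝ) ^ 2) ^ e ≤ 4 ^ |e| * (N : ℝ) ^ (s + 2 * b) := by
    obtain ⟨h₁, h₂⟩ := hτ
    have hjb := jb_le_one_add_abs (τ + (N : ℝ) ^ 2)
    rw [abs_of_nonneg (by linarith)] at hjb
    rw [← hpow]
    exact rpow_bounds_of_le_of_le_mul e (by positivity)
      (by linarith [le_abs_self (τ + (N : ℝ) ^ 2), abs_le_jb (τ + (N : ℝ) ^ 2)]) (by linarith)
  have hint := sqrt_setIntegral_Icc_bounds (by linarith)
    (((continuous_jb_rpow e).comp (continuous_add_const _)).pow 2).integrableOn_Icc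
    (by positivity)
    (fun τ hτ => pow_le_pow_left₀ (by positivity) (hweight τ hτ).1 2)
    (fun τ hτ => pow_le_pow_left₀ (Real.rpow_nonneg (jb_pos _).le e) (hweight τ hτ).2 2)
  rw [tsum_integral_vN]
  norm_num only [add_sub_sub_cancel, one_add_one_eq_two, mul_assoc] at hint ⊢
  exact hint

/-- the Example 2 computations: `𝓕(ū_N v̄_N)(n,τ) ≥ 1_{n=0}1_{[-1,1]}(τ)`
pointwise, `‖u_N‖_{X^{s,b}} ∼ N^s`, and `‖⟨τ+|n|²⟩^{s/2+b} v̂_N‖_{ℓ²L²} ∼ N^{s+2b}`. -/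
theorem stmt5 (s b : ℝ) :
    ∃ c C : ℝ, 0 < c ∧ 0 < C ∧ ∀ N : ℕ, 1 ≤ N →
      (∀ (n : ℤ × ℤ) (τ : ℝ),
        (if n = (0, 0) then
            Set.indicator (Set.Icc (-1 : ℝ) 1) (fun _ => (1 : ℝ)) τ
          else 0)
        ≤ ‖conv (conjFT (uN N)) (conjFT (vN N)) n τ‖)
      ∧ c * (N : ℝ) ^ s ≤ Xnorm s b (uN N) ∧ Xnorm s b (uN N) ≤ C * (N : ℝ) ^ s
      ∧ c * (N : ℝ) ^ (s + 2 * b)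
          ≤ Real.sqrt (∑' n : ℤ × ℤ, ∫ τ : ℝ, (jb (τ + nsq n) ^ (s / 2 + b) * ‖vN N n τ‖) ^ 2)
      ∧ Real.sqrt (∑' n : ℤ × ℤ, ∫ τ : ℝ, (jb (τ + nsq n) ^ (s / 2 + b) * ‖vN N n τ‖) ^ 2)
          ≤ C * (N : ℝ) ^ (s + 2 * b) := by
  obtain ⟨c₁, C₁, hc₁, hC₁, hu⟩ := Xnorm_uN_comparable s b
  obtain ⟨c₂, C₂, hc₂, -, hv⟩ := vN_weighted_norm_comparable s b
  refine ⟨min c₁ c₂, max C₁ C₂, lt_min hc₁ hc₂, lt_max_of_lt_left hC₁, fun N hN => ?_⟩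
  obtain ⟨hu_lo, hu_hi⟩ := hu N hN
  obtain ⟨hv_lo, hv_hi⟩ := hv N hN
  refine ⟨indicator_le_norm_conv_conjFT_uN_vN N, ?_, ?_, ?_, ?_⟩
  · exact le_trans (by gcongr; exact min_le_left _ _) hu_lo
  · exact hu_hi.trans (by gcongr; exact le_max_left _ _)
  · exact le_trans (by gcongr; exact min_le_right _ _) hv_lo
  · exact hv_hi.trans (by gcongr; exact le_max_right _ _)
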